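/- arXiv:1407.3760 — 3 statements merged into one kernel-verified Lean document; each statement's English description precedes it below -/
import Mathlib

section
/- Let (L,v) be an algebraically closed valued field extension of (K,v), b ∈ L×, e ∈ ℕ not divisible by the residue characteristic exponent, and c ∈ K with v(c b^e) = 0. Let a_0 ∈ L be an element integral over the valuation ring with residue a_0 v = (c b^e) v and v(a_0/(c b^e) − 1) > 0. Then there exists a_1 ∈ L with residue 1 and a_1^e = a_0/(c b^e), and setting a := a_1 b one has v(a − b) > v(b), v(a) = v(b), and c a^e = a_0 (hence (c a^e) v = (c b^e) v). -/
/-!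
Since `L` is algebraically closed, `X ^ e - C u` splits, and evaluating it at `1` gives
`∏ (1 - r) = 1 - u` over its roots `r`. The right side has positive valuation, so some factor does:
that root `r` is an `e`-th root of `u` with residue `1`, and `a := r * b` inherits everything else.
-/

open Polynomial

namespace AddValuation

section CommRing

variable {R Γ₀ : Type*} [CommRing R] [LinearOrderedAddCommMonoidWithTop Γ₀]
  (v : AddValuation R Γ₀)

theorem exists_mem_pos_of_pos_prod {s : Multiset R} (h : 0 < v s.prod) : ∃ x ∈ s, 0 < v x := by
  contrapose! h
  exact Multiset.prod_induction (fun x => v x ≤ 0) s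
    (fun x y hx hy => by rw [map_mul]; exact add_nonpos hx hy) (by simp) h

theorem map_eq_zero_of_pos_sub_one {x : R} (h : 0 < v (x - 1)) : v x = 0 := by
  simpa using v.map_eq_of_lt_sub (x := 1) (by simpa using h)

theorem ne_zero_of_pos_sub_one {x : R} (h : 0 < v (x - 1)) : x ≠ 0 := by
  rintro rfl
  simp at h

end CommRing

theorem lt_map_mul_sub_self {R Γ : Type*} [CommRing R] [AddCommGroup Γ] [LinearOrder Γ]
    [IsOrderedAddMonoid Γ] (v : AddValuation R (WithTop Γ)) {x y : R} (hx : 0 < v (x - 1))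
    (hy : v y ≠ ⊤) : v y < v (x * y - y) := by
  rw [← sub_one_mul, map_mul]
  simpa using WithTop.add_lt_add_right hy hx

theorem exists_pow_eq_of_pos_sub_one {L Γ₀ : Type*} [Field L] [IsAlgClosed L]
    [LinearOrderedAddCommMonoidWithTop Γ₀] (v : AddValuation L Γ₀) {n : ℕ} (hn : n ≠ 0) {u : L}
    (hu : 0 < v (u - 1)) : ∃ r, r ^ n = u ∧ 0 < v (r - 1) := by
  have heval := (IsAlgClosed.splits (X ^ n - C u)).eval_eq_prod_roots_of_monic
    (monic_X_pow_sub_C u hn) 1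
  obtain ⟨_, hmem, hpos⟩ := v.exists_mem_pos_of_pos_prod (s := (X ^ n - C u).roots.map (1 - ·))
    (by simpa [← heval, v.map_sub_swap] using hu)
  obtain ⟨r, hr, rfl⟩ := Multiset.mem_map.1 hmem
  exact ⟨r, by simpa [sub_eq_zero] using isRoot_of_mem_roots hr, by rwa [map_sub_swap]⟩

end AddValuation

theorem exists_strongly_homogeneous_approximation_general
    {L : Type*} [Field L] [IsAlgClosed L] (K : Subfield L)
    {Γ : Type*} [AddCommGroup Γ] [LinearOrder Γ] [IsOrderedAddMonoid Γ]
    (v : AddValuation L (WithTop Γ))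
    (b : L) (hb : b ≠ 0) (e : ℕ) (he : 0 < e)
    (c : K)
    (a₀ : L) (ha₀ : 0 < v (a₀ / ((c : L) * b ^ e) - 1)) :
    ∃ a₁ : L, a₁ ^ e = a₀ / ((c : L) * b ^ e) ∧ 0 < v (a₁ - 1) ∧
      v (a₁ * b - b) > v b ∧ v (a₁ * b) = v b ∧ (c : L) * (a₁ * b) ^ e = a₀ := by
  obtain ⟨a₁, hpow, hpos⟩ := v.exists_pow_eq_of_pos_sub_one he.ne' ha₀
  have hcb : (c : L) * b ^ e ≠ 0 := (div_ne_zero_iff.1 (v.ne_zero_of_pos_sub_one ha₀)).2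
  refine ⟨a₁, hpow, hpos, v.lt_map_mul_sub_self hpos (v.ne_top_iff.2 hb), ?_, ?_⟩
  · rw [v.map_mul, v.map_eq_zero_of_pos_sub_one hpos, zero_add]
  · calc (c : L) * (a₁ * b) ^ e = c * b ^ e * a₁ ^ e := by ring
      _ = a₀ := by rw [hpow, mul_div_cancel₀ _ hcb]

/-- core of Lemma 5.4: Let (L,v) be an algebraically closed valued
field extension of (K,v), b ∈ L×, e a positive integer not divisible by the residue
characteristic exponent (expressed as: no prime q with v(q) > 0 divides e), c ∈ K
with v(c b^e) = 0, and a₀ ∈ L with residue a₀v = (c b^e)v, i.e. v(a₀/(c b^e) − 1) > 0.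
Then there is a₁ ∈ L of residue 1 with a₁^e = a₀/(c b^e), and a := a₁ b satisfies
v(a − b) > v(b), v(a) = v(b) and c a^e = a₀. (Additive convention.) -/
theorem exists_strongly_homogeneous_approximation
    {L : Type*} [Field L] [IsAlgClosed L] (K : Subfield L)
    {Γ : Type*} [AddCommGroup Γ] [LinearOrder Γ] [IsOrderedAddMonoid Γ]
    (v : AddValuation L (WithTop Γ))
    (b : L) (hb : b ≠ 0) (e : ℕ) (he : 0 < e)
    (hres : ∀ q : ℕ, q.Prime → 0 < v (q : L) → ¬ (q : ℕ) ∣ e)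
    (c : K) (hcb : v ((c : L) * b ^ e) = 0)
    (a₀ : L) (ha₀ : 0 < v (a₀ / ((c : L) * b ^ e) - 1)) :
    ∃ a₁ : L, a₁ ^ e = a₀ / ((c : L) * b ^ e) ∧ 0 < v (a₁ - 1) ∧
      v (a₁ * b - b) > v b ∧ v (a₁ * b) = v b ∧ (c : L) * (a₁ * b) ^ e = a₀ :=
  exists_strongly_homogeneous_approximation_general K v b hb e he c a₀ ha₀
end

section
/- Let (K,v) be a valued field and F = K(x_1,…,x_n) with a valuation v extending that of K. Then trdeg(F|K) = n ≥ rr(vF/vK) + trdeg(Fv|Kv), where rr denotes rational rank of the quotient group vF/vK. -/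
/-!
If the residues of integral elements `y j` are algebraically independent over `Kv`, a polynomial
in the `y j` with coefficients in `K` has the value of its largest coefficient: dividing by that
coefficient gives a polynomial over the valuation ring with nonzero reduction, which evaluates to
a unit. So every nonzero element of `K[y]` has its value in `vK`. If moreover the values of the
`γ i` are rationally independent modulo `vK`, the terms `c_k γ^k` (`c_k ∈ K[y]`) of a nonzero
polynomial in the `γ i` have pairwise distinct values, so the largest one dominates and the sum
cannot vanish. Hence the `γ i` and the `y j` together are algebraically independent over `K`, and
their number is at most `trdeg(F|K) ≤ n`.
-/

open IsLocalRing MvPolynomial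

open Cardinal in
theorem AlgebraicIndependent.card_le_of_adjoin_range_eq_top {K F ι ι' : Type*} [Field K]
    [Field F] [Algebra K F] [Fintype ι] [Fintype ι'] {z : ι → F} (hz : AlgebraicIndependent K z)
    {x : ι' → F} (hx : IntermediateField.adjoin K (Set.range x) = ⊤) :
    Fintype.card ι ≤ Fintype.card ι' := by
  have : Algebra.IsAlgebraic (Algebra.adjoin K (Set.range x)) F := by
    rw [← IntermediateField.isAlgebraic_adjoin_iff_top, hx, Algebra.isAlgebraic_iff_isIntegral]
    exact Algebra.isIntegral_of_surjective IntermediateField.topEquiv.surjective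
  have hrange : #(Set.range x) ≤ Fintype.card ι' := by
    simpa using Cardinal.mk_range_le_lift (f := x)
  have h := hz.lift_cardinalMk_le_trdeg.trans
    (lift_le.mpr ((Algebra.IsAlgebraic.trdeg_le_cardinalMk K (Set.range x)).trans hrange))
  simpa using h

/-- The paper's "values rationally independent modulo `vK`", with `vK` read as `v (K^×)`. -/
def Valuation.ValuesRatIndep {F Γ₀ : Type*} [Field F] [LinearOrderedCommGroupWithZero Γ₀]
    (K : Type*) [Field K] [Algebra K F] (v : Valuation F Γ₀) {ι : Type*} [Fintype ι]
    (γ : ι → F) : Prop :=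
  ∀ m : ι → ℤ, (∃ c : K, c ≠ 0 ∧ ∏ i, v (γ i) ^ m i = v (algebraMap K F c)) → ∀ i, m i = 0

section

variable {K F Γ₀ : Type*} [Field K] [Field F] [Algebra K F] [LinearOrderedCommGroupWithZero Γ₀]

namespace Valuation.ValuesRatIndep

variable {v : Valuation F Γ₀} {ι : Type*} [Fintype ι] {γ : ι → F}

theorem eq_of_mul_prod_pow_eq (hγ : v.ValuesRatIndep K γ) (hγ0 : ∀ i, γ i ≠ 0) {a a' : K}
    (ha : a ≠ 0) (ha' : a' ≠ 0) {k k' : ι →₀ ℕ}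
    (h : v (algebraMap K F a) * ∏ i, v (γ i) ^ k i =
      v (algebraMap K F a') * ∏ i, v (γ i) ^ k' i) :
    k = k' := by
  have hv : ∀ i, v (γ i) ≠ 0 := fun i => v.ne_zero_iff.mpr (hγ0 i)
  have hva : v (algebraMap K F a) ≠ 0 := by simpa using ha
  have hquot : ∏ i, v (γ i) ^ ((k i : ℤ) - k' i) = v (algebraMap K F (a' / a)) := by
    simp_rw [zpow_sub₀ (hv _), zpow_natCast]
    rw [Finset.prod_div_distrib, map_div₀, map_div₀, div_eq_div_iff (Finset.prod_ne_zero_iff.mpr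
      fun i _ => pow_ne_zero _ (hv i)) hva, mul_comm, h]
  have hm := hγ _ ⟨a' / a, div_ne_zero ha' ha, hquot⟩
  ext i
  have := hm i
  omega

theorem algebraicIndependent {A : Type*} [CommRing A] [Algebra A F] (hγ : v.ValuesRatIndep K γ)
    (hγ0 : ∀ i, γ i ≠ 0)
    (hA : ∀ b : A, b ≠ 0 → ∃ a : K, a ≠ 0 ∧ v (algebraMap A F b) = v (algebraMap K F a)) :
    AlgebraicIndependent A γ := by
  classical
  refine algebraicIndependent_iff.mpr fun p hp => by_contra fun hp0 => ?_
  choose! a ha hva using fun k (hk : k ∈ p.support) => hA (p.coeff k) (mem_support_iff.mp hk)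
  set t : (ι →₀ ℕ) → F := fun k => algebraMap A F (p.coeff k) * ∏ i, γ i ^ k i
  have hvt : ∀ k ∈ p.support, v (t k) = v (algebraMap K F (a k)) * ∏ i, v (γ i) ^ k i := by
    intro k hk
    simp only [t, map_mul, map_prod, map_pow, hva k hk]
  have ht0 : ∀ k ∈ p.support, v (t k) ≠ 0 := by
    intro k hk
    rw [hvt k hk]
    refine mul_ne_zero (by simpa using ha k hk) (Finset.prod_ne_zero_iff.mpr fun i _ => ?_)
    exact pow_ne_zero _ (v.ne_zero_iff.mpr (hγ0 i))
  obtain ⟨k₀, hk₀, hmax⟩ :=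
    p.support.exists_max_image (fun k => v (t k)) (support_nonempty.mpr hp0)
  have hsum : v (aeval γ p) = v (t k₀) := by
    rw [aeval_def, eval₂_eq']
    refine Valuation.map_sum_eq_of_lt v hk₀ fun k hk => ?_
    obtain ⟨hk, hne⟩ := Finset.mem_sdiff.mp hk
    refine (hmax k hk).lt_of_ne fun h => hne (Finset.mem_singleton.mpr ?_)
    rw [hvt k hk, hvt k₀ hk₀] at h
    exact hγ.eq_of_mul_prod_pow_eq hγ0 (ha k hk) (ha k₀ hk₀) h
  exact ht0 k₀ hk₀ (by rw [← hsum, hp, map_zero])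

end Valuation.ValuesRatIndep

theorem Valuation.exists_eq_C_mul_map_integer {σ : Type*} (vK : Valuation K Γ₀)
    {c : MvPolynomial σ K} (hc : c ≠ 0) : ∃ a : K, a ≠ 0 ∧ ∃ c' : MvPolynomial σ vK.integer,
      MvPolynomial.map (residue vK.integer) c' ≠ 0 ∧
        c = C a * MvPolynomial.map (algebraMap vK.integer K) c' := by
  classical
  obtain ⟨l₀, hl₀, hmax⟩ :=
    c.support.exists_max_image (fun l => vK (c.coeff l)) (support_nonempty.mpr hc)
  have ha : c.coeff l₀ ≠ 0 := mem_support_iff.mp hl₀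
  obtain ⟨c', hc'⟩ :
      C (c.coeff l₀)⁻¹ * c ∈ Set.range (MvPolynomial.map (algebraMap vK.integer K)) := by
    rw [mem_range_map_iff_coeffs_subset]
    rintro _ hb
    obtain ⟨l, hl, rfl⟩ := mem_coeffs_iff.mp hb
    rw [mem_support_iff, coeff_C_mul] at hl
    rw [coeff_C_mul]
    refine ⟨⟨(c.coeff l₀)⁻¹ * c.coeff l, ?_⟩, rfl⟩
    rw [Valuation.mem_integer_iff, map_mul, map_inv₀, inv_mul_le_one₀ (vK.pos_iff.mpr ha)]
    exact hmax l (mem_support_iff.mpr (right_ne_zero_of_mul hl))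
  refine ⟨c.coeff l₀, ha, c', fun h => ?_, ?_⟩
  · have h₁ : c'.coeff l₀ = 1 := Subtype.val_injective <| by
      simpa [coeff_map, ha] using congrArg (coeff l₀) hc'
    simpa [coeff_map, h₁] using congrArg (coeff l₀) h
  · rw [hc', ← mul_assoc, ← C_mul, mul_inv_cancel₀ ha, C_1, one_mul]

variable (v : Valuation F Γ₀) (vK : Valuation K Γ₀) [vK.HasExtension v]
  {σ : Type*} {y : σ → v.integer}

theorem valuation_aeval_eq_one_of_map_residue_ne_zero
    (hy : AlgebraicIndependent (ResidueField vK.integer) (fun i => residue v.integer (y i)))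
    {c : MvPolynomial σ vK.integer} (hc : MvPolynomial.map (residue vK.integer) c ≠ 0) :
    v (aeval (fun i => (y i : F)) c) = 1 := by
  have hres : residue v.integer (aeval y c) =
      aeval (fun i => residue v.integer (y i)) (MvPolynomial.map (residue vK.integer) c) :=
    (aeval_algebraMap_apply _ y c).symm.trans (aeval_map_algebraMap _ _ c).symm
  have hunit : IsUnit (aeval y c) := by
    rw [← residue_ne_zero_iff_isUnit, hres]
    exact fun h => hc (algebraicIndependent_iff.mp hy _ h)
  exact (congrArg v (aeval_algebraMap_apply F y c)).trans
    ((Valuation.integer.integers v).isUnit_iff_valuation_eq_one.mp hunit)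

theorem exists_valuation_aeval_eq_valuation_algebraMap
    (hy : AlgebraicIndependent (ResidueField vK.integer) (fun i => residue v.integer (y i)))
    {c : MvPolynomial σ K} (hc : c ≠ 0) :
    ∃ a : K, a ≠ 0 ∧ v (aeval (fun i => (y i : F)) c) = v (algebraMap K F a) := by
  obtain ⟨a, ha, c', hc', rfl⟩ := vK.exists_eq_C_mul_map_integer hc
  refine ⟨a, ha, ?_⟩
  rw [map_mul, aeval_C, map_mul, aeval_map_algebraMap,
    valuation_aeval_eq_one_of_map_residue_ne_zero v vK hy hc', mul_one]

theorem algebraicIndependent_of_algebraicIndependent_residue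
    (hy : AlgebraicIndependent (ResidueField vK.integer) (fun i => residue v.integer (y i))) :
    AlgebraicIndependent K (fun i => (y i : F)) := by
  refine algebraicIndependent_iff.mpr fun c hc => by_contra fun hc0 => ?_
  obtain ⟨a, ha, hva⟩ := exists_valuation_aeval_eq_valuation_algebraMap v vK hy hc0
  rw [hc, map_zero, eq_comm, v.zero_iff, map_eq_zero_iff _ (algebraMap K F).injective] at hva
  exact ha hva

theorem exists_valuation_eq_of_mem_adjoin
    (hy : AlgebraicIndependent (ResidueField vK.integer) (fun i => residue v.integer (y i)))
    {b : F} (hb : b ∈ Algebra.adjoin K (Set.range fun i => (y i : F))) (hb0 : b ≠ 0) :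
    ∃ a : K, a ≠ 0 ∧ v b = v (algebraMap K F a) := by
  rw [Algebra.adjoin_range_eq_range_aeval] at hb
  obtain ⟨c, rfl⟩ := hb
  exact exists_valuation_aeval_eq_valuation_algebraMap v vK hy
    (by rintro rfl; exact hb0 (map_zero _))

theorem algebraicIndependent_sumElim_of_valuesRatIndep_of_residue {ι : Type*} [Fintype ι]
    {γ : ι → F} (hγ0 : ∀ i, γ i ≠ 0) (hγ : v.ValuesRatIndep K γ)
    (hy : AlgebraicIndependent (ResidueField vK.integer) (fun i => residue v.integer (y i))) :
    AlgebraicIndependent K (Sum.elim γ fun j => (y j : F)) :=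
  (algebraicIndependent_of_algebraicIndependent_residue v vK hy).sumElim <|
    hγ.algebraicIndependent hγ0 fun b hb =>
      exists_valuation_eq_of_mem_adjoin v vK hy b.2 (Subtype.coe_ne_coe.mpr hb)

end

theorem abhyankar_inequality_rational_function_field_general
    {K F : Type*} [Field K] [Field F] [Algebra K F]
    {Γ₀ : Type*} [LinearOrderedCommGroupWithZero Γ₀]
    (v : Valuation F Γ₀) (vK : Valuation K Γ₀) [Valuation.HasExtension vK v]
    (n : ℕ) (x : Fin n → F)
    (hgen : IntermediateField.adjoin K (Set.range x) = ⊤)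
    (ρ τ : ℕ)
    (γ : Fin ρ → F) (hγ0 : ∀ i, γ i ≠ 0)
    (hγ : ∀ m : Fin ρ → ℤ,
      (∃ c : K, c ≠ 0 ∧ (∏ i, (v (γ i)) ^ (m i)) = v (algebraMap K F c)) →
      ∀ i, m i = 0)
    (y : Fin τ → v.integer)
    (hy : AlgebraicIndependent (ResidueField vK.integer)
      (fun i => residue v.integer (y i))) :
    ρ + τ ≤ n := by
  have hind := algebraicIndependent_sumElim_of_valuesRatIndep_of_residue v vK hγ0 hγ hy
  simpa using hind.card_le_of_adjoin_range_eq_top hgen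

/-- Abhyankar inequality for rational function fields:
Let (K,v) be a valued field and F = K(x_1,…,x_n) a rational function field in n
variables (encoded: the x_i are algebraically independent and generate F over K),
with a valuation v on F extending that of K.  Then
n ≥ rr(vF/vK) + trdeg(Fv|Kv): for any ρ elements of F whose values are rationally
independent modulo vK and any τ integral elements of F whose residues are
algebraically independent over the residue field Kv, one has ρ + τ ≤ n. -/
theorem abhyankar_inequality_rational_function_field
    {K F : Type*} [Field K] [Field F] [Algebra K F]
    {Γ₀ : Type*} [LinearOrderedCommGroupWithZero Γ₀]
    (v : Valuation F Γ₀) (vK : Valuation K Γ₀) [Valuation.HasExtension vK v]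
    (n : ℕ) (x : Fin n → F)
    (hx : AlgebraicIndependent K x)
    (hgen : IntermediateField.adjoin K (Set.range x) = ⊤)
    (ρ τ : ℕ)
    (γ : Fin ρ → F) (hγ0 : ∀ i, γ i ≠ 0)
    (hγ : ∀ m : Fin ρ → ℤ,
      (∃ c : K, c ≠ 0 ∧ (∏ i, (v (γ i)) ^ (m i)) = v (algebraMap K F c)) →
      ∀ i, m i = 0)
    (y : Fin τ → v.integer)
    (hy : AlgebraicIndependent (ResidueField vK.integer)
      (fun i => residue v.integer (y i))) :
    ρ + τ ≤ n :=
  abhyankar_inequality_rational_function_field_general v vK n x hgen ρ τ γ hγ0 hγ y hy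
end

section
/- Let (K,v) be a henselian valued field and a ∈ L \ K an element of a valued field extension such that a is strongly homogeneous over (K,v): a is separable-algebraic over K, the extension of v to K(a) is unique, and v(a) = kras(a,K) := max{ v(τa − σa) : σ, τ ∈ Gal(K), τa ≠ σa }. Then for any d ∈ K and any b in a valued extension field with v(b − d − a) > v(b − d), the element a + d lies in the henselization of K(b) with respect to every extension of v from K(a,b) to the algebraic closure of K(b). -/
/-!
Let `σ` be a `K(b)`-automorphism of `L` preserving `O`, and `w` the valuation of `O`. As `σ` fixes
`c = b - d` and preserves `w`-comparisons, `w(c - a) < w(c)` gives `w(a - σ a) < w(a)`.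
Suppose `σ a ≠ a`. Then `σ a` is a root of `F = minpoly K(b) a`, and `F'(a) = ∏ (a - x)` over the
other roots `x`, which are `K`-conjugates of `a`. By the Krasner bound `v(a - x) ≤ v(a)`, so
`v(F'(a)) ≤ v(a ^ N)`. By uniqueness of the extension of `v` to `K(a)` all conjugates have the same
`w`-value as `a`, so `w(a - x) ≤ w(a)`, strictly for `x = σ a`, whence `w(F'(a)) < w(a ^ N)`.
Both `F'(a)` and `a ^ N` lie in `K(a, b)`, where comparisons by `w` and by `v` agree: contradiction.
-/

open IntermediateField

namespace Valuation

section Ring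

variable {R Γ₀ : Type*} [Ring R] [LinearOrderedCommMonoidWithZero Γ₀] (w : Valuation R Γ₀)

theorem exists_ne_map_eq_of_sum_eq_zero {ι : Type*} {s : Finset ι} {f : ι → R}
    (hf : ∃ i ∈ s, w (f i) ≠ 0) (hsum : ∑ i ∈ s, f i = 0) :
    ∃ i ∈ s, ∃ j ∈ s, i ≠ j ∧ w (f i) = w (f j) := by
  classical
  obtain ⟨i₀, hi₀, hne⟩ := hf
  obtain ⟨j, hj, hmax⟩ := s.exists_max_image (fun i => w (f i)) ⟨i₀, hi₀⟩
  by_contra! hlt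
  have hsum_val : w (∑ i ∈ s, f i) = w (f j) := w.map_sum_eq_of_lt hj fun i hi => by
    obtain ⟨his, hij⟩ := Finset.mem_sdiff.1 hi
    exact (hmax i his).lt_of_ne (hlt i his j hj (by simpa using hij))
  rw [hsum, map_zero] at hsum_val
  exact hne (le_antisymm (hsum_val ▸ hmax i₀ hi₀) zero_le)

end Ring

theorem map_multiset_prod_lt_pow_card {R Γ₀ : Type*} [CommRing R]
    [LinearOrderedCommGroupWithZero Γ₀] (w : Valuation R Γ₀) {s : Multiset R} {g : Γ₀}
    (h : ∀ x ∈ s, w x ≤ g) {y : R} (hy : y ∈ s) (hlt : w y < g) :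
    w s.prod < g ^ Multiset.card s := by
  obtain ⟨t, rfl⟩ := Multiset.exists_cons_of_mem hy
  have ht : w t.prod ≤ g ^ Multiset.card t := by
    rw [map_multiset_prod, ← Multiset.card_map w t]
    exact Multiset.prod_le_pow_card _ _ fun x hx => by
      obtain ⟨z, hz, rfl⟩ := Multiset.mem_map.1 hx
      exact h z (Multiset.mem_cons_of_mem hz)
  rw [Multiset.prod_cons, map_mul, Multiset.card_cons, pow_succ']
  exact mul_lt_mul_of_lt_of_le_of_nonneg_of_pos hlt ht zero_le (pow_pos (zero_le.trans_lt hlt) _)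

theorem exists_pow_eq_map_algebraMap {K L Γ₀ : Type*} [Field K] [Field L] [Algebra K L]
    [LinearOrderedCommGroupWithZero Γ₀] (w : Valuation L Γ₀) {a : L} (ha : IsIntegral K a) :
    ∃ n, 0 < n ∧ ∃ k : K, w (a ^ n) = w (algebraMap K L k) := by
  rcases eq_or_ne a 0 with rfl | ha0
  · exact ⟨1, one_pos, 0, by simp⟩
  set f := minpoly K a
  have hsum : ∑ i ∈ f.support, algebraMap K L (f.coeff i) * a ^ i = 0 := by
    rw [← minpoly.aeval K a, Polynomial.aeval_def, Polynomial.eval₂_eq_sum, Polynomial.sum_def]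
  have hlead : w (algebraMap K L (f.coeff f.natDegree) * a ^ f.natDegree) ≠ 0 := by
    simpa [ha0] using minpoly.ne_zero ha
  obtain ⟨i, hi, j, hj, hij, heq⟩ := w.exists_ne_map_eq_of_sum_eq_zero
    ⟨_, Polynomial.natDegree_mem_support_of_nonzero (minpoly.ne_zero ha), hlead⟩ hsum
  wlog hji : j < i generalizing i j
  · exact this j hj i hi hij.symm heq.symm (hij.lt_or_gt.resolve_right hji)
  refine ⟨i - j, Nat.sub_pos_of_lt hji, f.coeff j / f.coeff i, ?_⟩
  have hci : w (algebraMap K L (f.coeff i)) ≠ 0 := by simpa using Polynomial.mem_support_iff.1 hi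
  have haj : w a ^ j ≠ 0 := pow_ne_zero _ ((w.ne_zero_iff).2 ha0)
  have hsplit : w a ^ i = w a ^ (i - j) * w a ^ j := by rw [← pow_add, Nat.sub_add_cancel hji.le]
  rw [map_mul, map_mul, map_pow, map_pow, hsplit] at heq
  rw [map_div₀, map_div₀, map_pow, eq_div_iff hci]
  exact mul_right_cancel₀ haj (by rw [mul_comm _ (w _), mul_assoc, heq])

end Valuation

theorem AddValuation.map_multiset_prod_le_card_nsmul {R Γ₀ : Type*} [CommRing R]
    [LinearOrderedAddCommMonoidWithTop Γ₀] (v : AddValuation R Γ₀) {s : Multiset R} {g : Γ₀}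
    (h : ∀ x ∈ s, v x ≤ g) : v s.prod ≤ Multiset.card s • g := by
  induction s using Multiset.induction_on with
  | empty => simp
  | cons x s ih =>
    rw [Multiset.prod_cons, v.map_mul, Multiset.card_cons, succ_nsmul']
    exact add_le_add (h x (Multiset.mem_cons_self x s))
      (ih fun y hy => h y (Multiset.mem_cons_of_mem hy))

namespace ValuationSubring

variable {L : Type*} [Field L] (O : ValuationSubring L)

theorem valuation_le_valuation_iff_div_mem {x y : L} (hy : y ≠ 0) :
    O.valuation x ≤ O.valuation y ↔ x / y ∈ O := by
  rw [← valuation_le_one_iff, map_div₀, div_le_one₀ ((Valuation.pos_iff _).2 hy)]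

theorem valuation_map_le_map_iff {F : Type*} [FunLike F L L] [RingHomClass F L L] {τ : F}
    {S : Subfield L} (hτ : ∀ z ∈ S, τ z ∈ O ↔ z ∈ O) {x y : L} (hx : x ∈ S) (hy : y ∈ S) :
    O.valuation (τ x) ≤ O.valuation (τ y) ↔ O.valuation x ≤ O.valuation y := by
  rcases eq_or_ne y 0 with rfl | hy0
  · simp
  rw [O.valuation_le_valuation_iff_div_mem hy0,
    O.valuation_le_valuation_iff_div_mem ((map_ne_zero τ).2 hy0), ← map_div₀]
  exact hτ _ (div_mem hx hy)

theorem valuation_sub_map_lt {F : Type*} [FunLike F L L] [RingHomClass F L L] {σ : F}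
    (hσ : ∀ x, σ x ∈ O ↔ x ∈ O) {a c : L} (hc : σ c = c)
    (h : O.valuation (c - a) < O.valuation c) : O.valuation (a - σ a) < O.valuation a := by
  have hac : O.valuation a = O.valuation c :=
    Valuation.map_eq_of_sub_lt _ (by rwa [Valuation.map_sub_swap])
  have hσa : O.valuation (c - σ a) < O.valuation c := by
    have := (O.valuation_map_le_map_iff (S := ⊤) (fun z _ => hσ z) (x := c) (y := c - a)
      trivial trivial).not
    rw [not_le, not_le, map_sub, hc] at this
    exact this.2 h
  calc O.valuation (a - σ a) = O.valuation ((c - σ a) - (c - a)) := by ring_nf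
    _ ≤ max (O.valuation (c - σ a)) (O.valuation (c - a)) := Valuation.map_sub _ _ _
    _ < O.valuation c := max_lt hσa h
    _ = O.valuation a := hac.symm

theorem valuation_map_eq_of_isIntegral {K F : Type*} [Field K] [Algebra K L] [FunLike F L L]
    [AlgHomClass F K L L] {τ : F} {a : L} (ha : IsIntegral K a)
    (hτ : ∀ z ∈ K⟮a⟯, τ z ∈ O ↔ z ∈ O) : O.valuation (τ a) = O.valuation a := by
  obtain ⟨n, hn, k, hk⟩ := O.valuation.exists_pow_eq_map_algebraMap ha
  have ha_mem : a ^ n ∈ K⟮a⟯.toSubfield := pow_mem (mem_adjoin_simple_self K a) n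
  have hk_mem : algebraMap K L k ∈ K⟮a⟯.toSubfield := K⟮a⟯.algebraMap_mem k
  have hle := O.valuation_map_le_map_iff hτ ha_mem hk_mem
  have hge := O.valuation_map_le_map_iff hτ hk_mem ha_mem
  rw [AlgHomClass.commutes, ← hk] at hle hge
  have hpow := le_antisymm (hle.2 le_rfl) (hge.2 le_rfl)
  rw [map_pow, map_pow, map_pow] at hpow
  exact (pow_left_inj₀ zero_le zero_le hn.ne').1 hpow

variable {Γ : Type*} [AddCommGroup Γ] [LinearOrder Γ] [IsOrderedAddMonoid Γ]
  (v : AddValuation L (WithTop Γ))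

theorem valuation_le_valuation_iff_addValuation_le {S : Subfield L}
    (hO : ∀ z ∈ S, z ∈ O ↔ 0 ≤ v z) {x y : L} (hx : x ∈ S) (hy : y ∈ S) :
    O.valuation x ≤ O.valuation y ↔ v y ≤ v x := by
  rcases eq_or_ne y 0 with rfl | hy0
  · simp
  rw [O.valuation_le_valuation_iff_div_mem hy0, hO _ (div_mem hx hy),
    ← add_le_add_iff_left_of_ne_top (v.ne_top_iff.2 hy0), zero_add, ← v.map_mul,
    div_mul_cancel₀ x hy0]

theorem valuation_lt_valuation_iff_addValuation_lt {S : Subfield L}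
    (hO : ∀ z ∈ S, z ∈ O ↔ 0 ≤ v z) {x y : L} (hx : x ∈ S) (hy : y ∈ S) :
    O.valuation x < O.valuation y ↔ v y < v x := by
  rw [← not_le, ← not_le, O.valuation_le_valuation_iff_addValuation_le v hO hy hx]

theorem eq_of_mem_aroots_of_valuation_sub_lt {M : Type*} [Field M] [Algebra M L] {a y : L}
    (hsep : IsSeparable M a) (hsplit : ((minpoly M a).map (algebraMap M L)).Splits)
    (hO : ∀ z ∈ M⟮a⟯, z ∈ O ↔ 0 ≤ v z)
    (hkras : ∀ x ∈ (minpoly M a).aroots L, x ≠ a → v (a - x) ≤ v a)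
    (hconj : ∀ x ∈ (minpoly M a).aroots L, O.valuation x ≤ O.valuation a)
    (hy : y ∈ (minpoly M a).aroots L) (hclose : O.valuation (a - y) < O.valuation a) :
    y = a := by
  classical
  by_contra hya
  set R := (minpoly M a).aroots L
  have hnodup : R.Nodup := Polynomial.nodup_roots (Polynomial.Separable.map hsep)
  have ha : a ∈ R := Polynomial.mem_aroots.2 ⟨minpoly.ne_zero hsep.isIntegral, minpoly.aeval M a⟩
  -- The factors `a - x` need not lie in `M⟮a⟯`, where `O` and `v` are comparable; their product does.
  have hP : Polynomial.aeval a (Polynomial.derivative (minpoly M a)) =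
      ((R.erase a).map (a - ·)).prod := by
    rw [Polynomial.aeval_def, ← Polynomial.eval_map, ← Polynomial.derivative_map]
    exact hsplit.eval_root_derivative ((minpoly.monic hsep.isIntegral).map _) ha
  have hP_mem : Polynomial.aeval a (Polynomial.derivative (minpoly M a)) ∈ M⟮a⟯.toSubfield :=
    algebra_adjoin_le_adjoin M {a} (Polynomial.aeval_mem_adjoin_singleton M a)
  have hv : v (Polynomial.aeval a (Polynomial.derivative (minpoly M a))) ≤
      v (a ^ Multiset.card (R.erase a)) := by
    rw [hP, v.map_pow, ← Multiset.card_map (a - ·)]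
    refine v.map_multiset_prod_le_card_nsmul fun z hz => ?_
    obtain ⟨x, hx, rfl⟩ := Multiset.mem_map.1 hz
    exact hkras x (Multiset.mem_of_mem_erase hx) (hnodup.mem_erase_iff.1 hx).1
  have hw : O.valuation (Polynomial.aeval a (Polynomial.derivative (minpoly M a))) <
      O.valuation (a ^ Multiset.card (R.erase a)) := by
    rw [hP, map_pow, ← Multiset.card_map (a - ·)]
    refine O.valuation.map_multiset_prod_lt_pow_card (fun z hz => ?_)
      (Multiset.mem_map_of_mem _ (hnodup.mem_erase_iff.2 ⟨hya, hy⟩)) hclose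
    obtain ⟨x, hx, rfl⟩ := Multiset.mem_map.1 hz
    exact (Valuation.map_sub _ _ _).trans
      (max_le le_rfl (hconj x (Multiset.mem_of_mem_erase hx)))
  exact hw.not_ge ((O.valuation_le_valuation_iff_addValuation_le v hO
    (pow_mem (mem_adjoin_simple_self M a) _) hP_mem).2 hv)

end ValuationSubring

namespace IntermediateField

variable {K L : Type*} [Field K] [Field L] [Algebra K L] {M : IntermediateField K L}

theorem exists_algEquiv_apply_eq_of_mem_aroots [Normal M L] {a x : L}
    (hx : x ∈ (minpoly M a).aroots L) : ∃ τ : L ≃ₐ[K] L, τ a = x := by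
  obtain ⟨τ, hτ⟩ := minpoly.exists_algEquiv_of_root' (Algebra.IsAlgebraic.isAlgebraic a)
    (Polynomial.mem_aroots.1 hx).2
  exact ⟨τ.restrictScalars K, hτ⟩

theorem apply_mem_aroots_minpoly {σ : L ≃ₐ[K] L} (hσ : ∀ z ∈ M, σ z = z) {a : L}
    (ha : IsIntegral M a) : σ a ∈ (minpoly M a).aroots L := by
  let σM : L →ₐ[M] L := { (σ : L →+* L) with commutes' := fun m => hσ m m.2 }
  have := Polynomial.aeval_algHom_apply σM a (minpoly M a)
  rw [minpoly.aeval, map_zero] at this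
  exact Polynomial.mem_aroots.2 ⟨minpoly.ne_zero ha, this⟩

end IntermediateField

theorem strongly_homogeneous_mem_henselization_general
    {K L : Type*} [Field K] [Field L] [Algebra K L] [IsAlgClosed L]
    {Γ : Type*} [AddCommGroup Γ] [LinearOrder Γ] [IsOrderedAddMonoid Γ]
    (v : AddValuation L (WithTop Γ))
    (a b : L) (d : K)
    -- L is an algebraic closure of K(b):
    (hL : Algebra.IsAlgebraic (adjoin K {b} : IntermediateField K L) L)
    -- a ∈ K^sep \ K:
    (ha_int : IsIntegral K a) (ha_sep : IsSeparable K a)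
    -- the extension of v from K to K(a) is unique:
    (huniq : ∀ O : ValuationSubring L,
      (∀ c : K, algebraMap K L c ∈ O ↔ 0 ≤ v (algebraMap K L c)) →
      ∀ z : L, z ∈ (adjoin K {a} : IntermediateField K L) → (z ∈ O ↔ 0 ≤ v z))
    -- v(a) = kras(a, K):
    (hkras_le : ∀ σ τ : L ≃ₐ[K] L, τ a ≠ σ a → v (τ a - σ a) ≤ v a)
    -- a is a homogeneous approximation of b via d:
    (hb : v (b - algebraMap K L d - a) > v (b - algebraMap K L d)) :
    -- conclusion: for every extension (valuation subring O of L) of v from K(a,b),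
    -- a + d is fixed by the decomposition group of O over K(b):
    ∀ O : ValuationSubring L,
      (∀ z : L, z ∈ (adjoin K {a, b} : IntermediateField K L) → (z ∈ O ↔ 0 ≤ v z)) →
      ∀ σ : L ≃ₐ[K] L,
        (∀ z : L, z ∈ (adjoin K {b} : IntermediateField K L) → σ z = z) →
        (∀ x : L, σ x ∈ O ↔ x ∈ O) →
        σ (a + algebraMap K L d) = a + algebraMap K L d := by
  intro O hO σ hσ_fix hσ_O
  set M := K⟮b⟯
  have : IsAlgClosure M L := ⟨inferInstance, hL⟩
  have : Normal M L := IsAlgClosure.normal M L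
  have hKa : K⟮a⟯ ≤ K⟮a, b⟯ := adjoin.mono K _ _ (by simp)
  have hMab : M ≤ K⟮a, b⟯ := adjoin.mono K _ _ (by simp)
  have hMa (z : L) (hz : z ∈ M⟮a⟯) : z ∈ K⟮a, b⟯ := by
    rwa [← Set.pair_comm, ← Set.singleton_union, ← adjoin_adjoin_left]
  have hc : b - algebraMap K L d ∈ M :=
    sub_mem (mem_adjoin_simple_self K b) (IntermediateField.algebraMap_mem _ d)
  suffices hσa : σ a = a by rw [map_add, hσa, AlgEquiv.commutes]
  have hclose : O.valuation (a - σ a) < O.valuation a :=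
    O.valuation_sub_map_lt hσ_O (hσ_fix _ hc)
      ((O.valuation_lt_valuation_iff_addValuation_lt v (S := K⟮a, b⟯.toSubfield) hO
        (sub_mem (hMab hc) (subset_adjoin K _ (by simp))) (hMab hc)).2 hb)
  -- `O.comap τ` also extends `v` from `K`, hence agrees with `O` on `K⟮a⟯`
  have hval_conj (τ : L ≃ₐ[K] L) : O.valuation (τ a) = O.valuation a :=
    O.valuation_map_eq_of_isIntegral ha_int fun z hz =>
      (huniq (O.comap (τ : L →+* L))
        (fun k => by simpa using hO _ (IntermediateField.algebraMap_mem _ k)) z hz).trans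
        (hO z (hKa hz)).symm
  refine O.eq_of_mem_aroots_of_valuation_sub_lt v (ha_sep.tower_top M) (IsAlgClosed.splits _)
    (fun z hz => hO z (hMa z hz)) (fun x hx hxa => ?_) (fun x hx => ?_)
    (apply_mem_aroots_minpoly hσ_fix ha_int.tower_top) hclose
  · obtain ⟨τ, rfl⟩ := exists_algEquiv_apply_eq_of_mem_aroots hx
    simpa using hkras_le τ 1 (Ne.symm hxa)
  · obtain ⟨τ, rfl⟩ := exists_algEquiv_apply_eq_of_mem_aroots hx
    exact (hval_conj τ).le

/-- corrected Lemma 5.1: Let (K,v) be a valued field and L an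
algebraically closed valued extension which is an algebraic closure of K(b).
Let a ∈ L \ K be strongly homogeneous over (K,v): a is separable-algebraic over K,
the extension of v from K to K(a) is unique (encoded: every valuation subring of L
inducing the valuation ring of v on K induces the valuation ring of v on K(a)), and
v(a) = kras(a,K) = max{v(τa − σa) : σ,τ ∈ Gal(K), τa ≠ σa}.  Then for any d ∈ K and
any b with v(b − d − a) > v(b − d), the element a + d lies in the henselization of
K(b) with respect to every extension of v from K(a,b) to the algebraic closure of
K(b); the henselization is the decomposition field, so membership is encoded as:
a + d is fixed by every K(b)-automorphism of L preserving the valuation subring O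
of the chosen extension.  (Additive valuation convention.) -/
theorem strongly_homogeneous_mem_henselization
    {K L : Type*} [Field K] [Field L] [Algebra K L] [IsAlgClosed L]
    {Γ : Type*} [AddCommGroup Γ] [LinearOrder Γ] [IsOrderedAddMonoid Γ]
    (v : AddValuation L (WithTop Γ))
    (a b : L) (d : K)
    -- L is an algebraic closure of K(b):
    (hL : Algebra.IsAlgebraic (adjoin K {b} : IntermediateField K L) L)
    -- a ∈ K^sep \ K:
    (ha_int : IsIntegral K a) (ha_sep : IsSeparable K a)
    (ha_notin : a ∉ Set.range (algebraMap K L))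
    -- the extension of v from K to K(a) is unique:
    (huniq : ∀ O : ValuationSubring L,
      (∀ c : K, algebraMap K L c ∈ O ↔ 0 ≤ v (algebraMap K L c)) →
      ∀ z : L, z ∈ (adjoin K {a} : IntermediateField K L) → (z ∈ O ↔ 0 ≤ v z))
    -- v(a) = kras(a, K):
    (hkras_le : ∀ σ τ : L ≃ₐ[K] L, τ a ≠ σ a → v (τ a - σ a) ≤ v a)
    (hkras_eq : ∃ σ τ : L ≃ₐ[K] L, τ a ≠ σ a ∧ v (τ a - σ a) = v a)
    -- a is a homogeneous approximation of b via d: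
    (hb : v (b - algebraMap K L d - a) > v (b - algebraMap K L d)) :
    -- conclusion: for every extension (valuation subring O of L) of v from K(a,b),
    -- a + d is fixed by the decomposition group of O over K(b):
    ∀ O : ValuationSubring L,
      (∀ z : L, z ∈ (adjoin K {a, b} : IntermediateField K L) → (z ∈ O ↔ 0 ≤ v z)) →
      ∀ σ : L ≃ₐ[K] L,
        (∀ z : L, z ∈ (adjoin K {b} : IntermediateField K L) → σ z = z) →
        (∀ x : L, σ x ∈ O ↔ x ∈ O) →
        σ (a + algebraMap K L d) = a + algebraMap K L d :=
  strongly_homogeneous_mem_henselization_general v a b d hL ha_int ha_sep huniq hkras_le hb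
end
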